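/- arXiv:1105.2237 — 4 statements merged into one kernel-verified Lean document; each statement's English description precedes it below -/
import Mathlib

section
/- Let L be a Lie algebra over a commutative ring Φ in which 2 is invertible, graded by a group G. For any n ≥ 2 and any elements g₁, g₂, …, g_n ∈ G, if the iterated bracket [L_{g₁}, [L_{g₂}, [⋯, [L_{g_{n−1}}, L_{g_n}]⋯]]] is nonzero, then g_i g_j = g_j g_i for all i, j ∈ {1, 2, …, n}. -/
/-- The span of all brackets `⁅a, b⁆` with `a ∈ A`, `b ∈ B`. -/
def bracketSpan {Φ L : Type*} [CommRing Φ] [LieRing L] [LieAlgebra Φ L]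
    (A B : Submodule Φ L) : Submodule Φ L :=
  Submodule.span Φ {z | ∃ a ∈ A, ∃ b ∈ B, z = ⁅a, b⁆}

/-- The right-nested iterated bracket `⁅L_{g₁}, ⁅L_{g₂}, ⁅⋯, ⁅L_{g_{n-1}}, L_{g_n}⁆⋯⁆` of the
homogeneous components indexed by a list `[g₁, …, g_n]`. -/
def iterBracket {Φ L G : Type*} [CommRing Φ] [LieRing L] [LieAlgebra Φ L]
    (Lg : G → Submodule Φ L) : List G → Submodule Φ L
  | [] => ⊥
  | [g] => Lg g
  | g :: (g' :: l) => bracketSpan (Lg g) (iterBracket Lg (g' :: l))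

/-!
Induct on the list. A nonzero bracket of homogeneous elements of degrees `a` and `b` lies in
both `L_{ab}` and `L_{ba}`, so `a` and `b` commute. For `[L_g, [L_h, L_t]]` with a nonzero
`⁅x, ⁅y, z⁆⁆`, the induction hypothesis applied to `h :: t` handles the tail; by the Jacobi
identity either `⁅⁅x, y⁆, z⁆ ≠ 0` or `⁅y, ⁅x, z⁆⁆ ≠ 0`, and the induction hypothesis applied to
`gh :: t`, respectively `g :: t`, shows that `g` commutes with `h` and with every element of `t`.
-/

section BracketSpan

variable {Φ L : Type*} [CommRing Φ] [LieRing L] [LieAlgebra Φ L]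

theorem lie_mem_bracketSpan {A B : Submodule Φ L} {a b : L} (ha : a ∈ A) (hb : b ∈ B) :
    ⁅a, b⁆ ∈ bracketSpan A B :=
  Submodule.subset_span ⟨a, ha, b, hb, rfl⟩

theorem exists_lie_ne_zero_of_bracketSpan_ne_bot {A B : Submodule Φ L}
    (hne : bracketSpan A B ≠ ⊥) : ∃ a ∈ A, ∃ b ∈ B, ⁅a, b⁆ ≠ 0 := by
  contrapose! hne
  refine Submodule.span_eq_bot.2 ?_
  rintro _ ⟨a, ha, b, hb, rfl⟩
  exact hne a ha b hb

theorem exists_lie_ne_zero_of_mem_span {S : Set L} {x w : L} (hw : w ∈ Submodule.span Φ S)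
    (hxw : ⁅x, w⁆ ≠ 0) : ∃ s ∈ S, ⁅x, s⁆ ≠ 0 := by
  contrapose! hxw
  exact Submodule.span_le (p := LinearMap.ker (LieAlgebra.ad Φ L x)).2 hxw hw

theorem exists_lie_lie_ne_zero_of_bracketSpan_ne_bot {A B C : Submodule Φ L}
    (hne : bracketSpan A (bracketSpan B C) ≠ ⊥) :
    ∃ a ∈ A, ∃ b ∈ B, ∃ c ∈ C, ⁅a, ⁅b, c⁆⁆ ≠ 0 := by
  obtain ⟨a, ha, w, hw, haw⟩ := exists_lie_ne_zero_of_bracketSpan_ne_bot hne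
  obtain ⟨_, ⟨b, hb, c, hc, rfl⟩, habc⟩ := exists_lie_ne_zero_of_mem_span hw haw
  exact ⟨a, ha, b, hb, c, hc, habc⟩

end BracketSpan

section Graded

open Function

variable {Φ L G : Type*} [CommRing Φ] [LieRing L] [LieAlgebra Φ L] {Lg : G → Submodule Φ L}

theorem iterBracket_cons_of_ne_nil (g : G) {t : List G} (ht : t ≠ []) :
    iterBracket Lg (g :: t) = bracketSpan (Lg g) (iterBracket Lg t) := by
  cases t with
  | nil => exact absurd rfl ht
  | cons => rfl

theorem iterBracket_cons_ne_bot {g : G} {t : List G} (ht : t ≠ []) {x w : L} (hx : x ∈ Lg g)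
    (hw : w ∈ iterBracket Lg t) (hxw : ⁅x, w⁆ ≠ 0) : iterBracket Lg (g :: t) ≠ ⊥ := by
  rw [iterBracket_cons_of_ne_nil g ht, Submodule.ne_bot_iff]
  exact ⟨_, lie_mem_bracketSpan hx hw, hxw⟩

variable [Group G]

theorem iterBracket_le_prod (hgr : ∀ a b : G, ∀ x ∈ Lg a, ∀ y ∈ Lg b, ⁅x, y⁆ ∈ Lg (a * b)) :
    ∀ {t : List G}, t ≠ [] → iterBracket Lg t ≤ Lg t.prod
  | [_], _ => by simp [iterBracket]
  | g :: h :: t, _ => by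
    rw [iterBracket_cons_of_ne_nil g (List.cons_ne_nil h t), List.prod_cons]
    refine Submodule.span_le.2 ?_
    rintro _ ⟨x, hx, w, hw, rfl⟩
    exact hgr _ _ x hx w (iterBracket_le_prod hgr (List.cons_ne_nil h t) hw)

theorem commute_of_lie_ne_zero (hdisj : Pairwise (Disjoint on Lg))
    (hgr : ∀ a b : G, ∀ x ∈ Lg a, ∀ y ∈ Lg b, ⁅x, y⁆ ∈ Lg (a * b))
    {a b : G} {x y : L} (hx : x ∈ Lg a) (hy : y ∈ Lg b) (hxy : ⁅x, y⁆ ≠ 0) : Commute a b := by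
  by_contra hab
  have hba : ⁅x, y⁆ ∈ Lg (b * a) := by
    rw [← lie_skew]
    exact neg_mem (hgr b a y hy x hx)
  exact hxy (Submodule.disjoint_def.1 (hdisj hab) _ (hgr a b x hx y hy) hba)

theorem pairwise_commute_cons_cons (hdisj : Pairwise (Disjoint on Lg))
    (hgr : ∀ a b : G, ∀ x ∈ Lg a, ∀ y ∈ Lg b, ⁅x, y⁆ ∈ Lg (a * b))
    {g h : G} {t : List G} (ht : t ≠ [])
    (ih : ∀ a, iterBracket Lg (a :: t) ≠ ⊥ → (a :: t).Pairwise Commute)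
    {x y z : L} (hx : x ∈ Lg g) (hy : y ∈ Lg h) (hz : z ∈ iterBracket Lg t)
    (hxyz : ⁅x, ⁅y, z⁆⁆ ≠ 0) : (g :: h :: t).Pairwise Commute := by
  have hzk : z ∈ Lg t.prod := iterBracket_le_prod hgr ht hz
  have hyz : ⁅y, z⁆ ≠ 0 := fun h0 => hxyz (by rw [h0, lie_zero])
  have hht : (h :: t).Pairwise Commute := ih h (iterBracket_cons_ne_bot ht hy hz hyz)
  have hjacobi : ⁅⁅x, y⁆, z⁆ ≠ 0 ∨ ⁅y, ⁅x, z⁆⁆ ≠ 0 := by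
    by_contra! h0
    exact hxyz (by rw [leibniz_lie, h0.1, h0.2, add_zero])
  have hg : Commute g h ∧ ∀ a ∈ t, Commute g a := by
    rcases hjacobi with hxy_z | hy_xz
    · have hxy : ⁅x, y⁆ ≠ 0 := fun h0 => hxy_z (by rw [h0, zero_lie])
      have hght := (List.pairwise_cons.1
        (ih (g * h) (iterBracket_cons_ne_bot ht (hgr _ _ x hx y hy) hz hxy_z))).1
      refine ⟨commute_of_lie_ne_zero hdisj hgr hx hy hxy, fun a ha => ?_⟩
      simpa using (hght a ha).mul_left ((List.pairwise_cons.1 hht).1 a ha).inv_left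
    · have hxz : ⁅x, z⁆ ≠ 0 := fun h0 => hy_xz (by rw [h0, lie_zero])
      have hgt := (List.pairwise_cons.1 (ih g (iterBracket_cons_ne_bot ht hx hz hxz))).1
      have hghk : Commute g (h * t.prod) :=
        commute_of_lie_ne_zero hdisj hgr hx (hgr _ _ y hy z hzk) hxyz
      have hgk : Commute g t.prod := Commute.list_prod_right t g hgt
      exact ⟨by simpa using hghk.mul_right hgk.inv_right, hgt⟩
  exact List.pairwise_cons.2 ⟨List.forall_mem_cons.2 hg, hht⟩

theorem pairwise_commute_of_iterBracket_cons_ne_bot (hdisj : Pairwise (Disjoint on Lg))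
    (hgr : ∀ a b : G, ∀ x ∈ Lg a, ∀ y ∈ Lg b, ⁅x, y⁆ ∈ Lg (a * b)) :
    ∀ (t : List G) (g : G), iterBracket Lg (g :: t) ≠ ⊥ → (g :: t).Pairwise Commute
  | [], g, _ => List.pairwise_singleton _ g
  | [h], _, hne => by
    obtain ⟨x, hx, y, hy, hxy⟩ := exists_lie_ne_zero_of_bracketSpan_ne_bot hne
    simpa using commute_of_lie_ne_zero hdisj hgr hx hy hxy
  | h :: a :: t, _, hne => by
    obtain ⟨x, hx, y, hy, z, hz, hxyz⟩ := exists_lie_lie_ne_zero_of_bracketSpan_ne_bot hne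
    exact pairwise_commute_cons_cons hdisj hgr (List.cons_ne_nil a t)
      (pairwise_commute_of_iterBracket_cons_ne_bot hdisj hgr (a :: t)) hx hy hz hxyz

end Graded

theorem commute_of_iterBracket_ne_bot_general
    {Φ L G : Type*} [CommRing Φ]
    [LieRing L] [LieAlgebra Φ L] [Group G] [DecidableEq G]
    (Lg : G → Submodule Φ L)
    (hdirect : DirectSum.IsInternal Lg)
    (hgrading : ∀ a b : G, ∀ x ∈ Lg a, ∀ y ∈ Lg b, ⁅x, y⁆ ∈ Lg (a * b))
    (l : List G)
    (hne : iterBracket Lg l ≠ ⊥) :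
    ∀ gi ∈ l, ∀ gj ∈ l, gi * gj = gj * gi := by
  cases l with
  | nil => exact absurd rfl hne
  | cons g t =>
    have hpair := pairwise_commute_of_iterBracket_cons_ne_bot
      hdirect.submodule_iSupIndep.pairwiseDisjoint hgrading t g hne
    exact fun gi hi gj hj => hpair.forall_of_forall (fun a _ => Commute.refl a) hi hj

/-- If `L` is a Lie algebra over a commutative ring `Φ` with `2` invertible, graded by a
group `G`, and the iterated bracket `⁅L_{g₁}, ⁅L_{g₂}, ⁅⋯, ⁅L_{g_{n-1}}, L_{g_n}⁆⋯⁆` is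
nonzero (for `n ≥ 2`), then `g_i g_j = g_j g_i` for all `i, j ∈ {1, …, n}`. -/
theorem commute_of_iterBracket_ne_bot
    {Φ L G : Type*} [CommRing Φ] [Invertible (2 : Φ)]
    [LieRing L] [LieAlgebra Φ L] [Group G] [DecidableEq G]
    (Lg : G → Submodule Φ L)
    (hdirect : DirectSum.IsInternal Lg)
    (hgrading : ∀ a b : G, ∀ x ∈ Lg a, ∀ y ∈ Lg b, ⁅x, y⁆ ∈ Lg (a * b))
    (l : List G) (hlen : 2 ≤ l.length)
    (hne : iterBracket Lg l ≠ ⊥) :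
    ∀ gi ∈ l, ∀ gj ∈ l, gi * gj = gj * gi :=
  commute_of_iterBracket_ne_bot_general Lg hdirect hgrading l hne
end

section
/- Let L be a Lie algebra over a commutative ring Φ in which 2 is invertible, graded by a group G, and let g, g' ∈ G with gg' ≠ g'g. Then for every n ≥ 0 and all elements g₁, …, g_n ∈ G, the iterated bracket [L_{g'}, [L_{g₁}, [⋯, [L_{g_n}, L_g]⋯]]] equals 0. -/
/-!
A bracket `⁅L_p, L_q⁆` with `p q ≠ q p` vanishes, since by antisymmetry it lies in
`L_{pq} ∩ L_{qp} = 0`. For the iterated bracket, induct on the list with the outer index `h`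
(not commuting with `g`) generalised. Take `a ∈ L_h`, `b ∈ L_{g₁}` and `m` in the inner
bracket. If `h g₁` commutes with `g`, then `g₁` cannot (else `h = (h g₁) g₁⁻¹` would), so
`⁅b, m⁆ = 0`. Otherwise `⁅a, ⁅b, m⁆⁆ = ⁅⁅a, b⁆, m⁆ + ⁅b, ⁅a, m⁆⁆`, and both terms vanish by
induction, applied to `⁅a, b⁆ ∈ L_{h g₁}` and to `a`.
-/

section Bracket

variable {Φ L : Type*} [CommRing Φ] [LieRing L] [LieAlgebra Φ L]

theorem bracketSpan_le_iff {A B N : Submodule Φ L} :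
    bracketSpan A B ≤ N ↔ ∀ a ∈ A, ∀ b ∈ B, ⁅a, b⁆ ∈ N := by
  rw [bracketSpan, Submodule.span_le]
  constructor
  · intro h a ha b hb
    exact h ⟨a, ha, b, hb, rfl⟩
  · rintro h _ ⟨a, ha, b, hb, rfl⟩
    exact h a ha b hb

theorem bracketSpan_eq_bot_iff {A B : Submodule Φ L} :
    bracketSpan A B = ⊥ ↔ ∀ a ∈ A, ∀ b ∈ B, ⁅a, b⁆ = 0 := by
  simp only [← le_bot_iff, bracketSpan_le_iff, Submodule.mem_bot]

theorem iterBracket_cons {G : Type*} (Lg : G → Submodule Φ L) (g : G) {l : List G}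
    (hl : l ≠ []) : iterBracket Lg (g :: l) = bracketSpan (Lg g) (iterBracket Lg l) := by
  cases l with
  | nil => exact absurd rfl hl
  | cons _ _ => rfl

end Bracket

section Graded

variable {Φ L G : Type*} [CommRing Φ] [LieRing L] [LieAlgebra Φ L] {Lg : G → Submodule Φ L}

theorem lie_eq_zero_of_not_commute [Mul G] (hindep : iSupIndep Lg)
    (hgrading : ∀ a b : G, ∀ x ∈ Lg a, ∀ y ∈ Lg b, ⁅x, y⁆ ∈ Lg (a * b))
    {p q : G} (hpq : ¬Commute p q) {x y : L} (hx : x ∈ Lg p) (hy : y ∈ Lg q) :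
    ⁅x, y⁆ = 0 := by
  have hxy : ⁅x, y⁆ ∈ Lg (q * p) := by
    simpa only [lie_skew] using (Lg (q * p)).neg_mem (hgrading q p y hy x hx)
  exact Submodule.disjoint_def.mp (hindep.pairwiseDisjoint hpq) _ (hgrading p q x hx y hy) hxy

theorem lie_eq_zero_of_mem_iterBracket_append_singleton [Group G] (hindep : iSupIndep Lg)
    (hgrading : ∀ a b : G, ∀ x ∈ Lg a, ∀ y ∈ Lg b, ⁅x, y⁆ ∈ Lg (a * b)) {g : G} :
    ∀ (l : List G) {h : G}, ¬Commute h g →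
      ∀ a ∈ Lg h, ∀ x ∈ iterBracket Lg (l ++ [g]), ⁅a, x⁆ = 0
  | [], _, hhg, _, ha, _, hx => lie_eq_zero_of_not_commute hindep hgrading hhg ha hx
  | g₁ :: l, h, hhg, a, ha, x, hx => by
    rw [List.cons_append, iterBracket_cons Lg g₁ (by simp)] at hx
    suffices bracketSpan (Lg g₁) (iterBracket Lg (l ++ [g])) ≤
        LinearMap.ker (LieAlgebra.ad Φ L a) from this hx
    refine bracketSpan_le_iff.2 fun b hb m hm => ?_
    have ih : ∀ {k : G}, ¬Commute k g → ∀ c ∈ Lg k, ∀ m ∈ iterBracket Lg (l ++ [g]),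
        ⁅c, m⁆ = 0 :=
      lie_eq_zero_of_mem_iterBracket_append_singleton hindep hgrading l
    rw [LinearMap.mem_ker, LieAlgebra.ad_apply]
    by_cases hhg₁g : Commute (h * g₁) g
    · have hg₁g : ¬Commute g₁ g := fun hg₁g =>
        hhg (by simpa only [mul_inv_cancel_right] using hhg₁g.mul_left hg₁g.inv_left)
      rw [ih hg₁g b hb m hm, lie_zero]
    · rw [leibniz_lie, ih hhg₁g _ (hgrading h g₁ a ha b hb) m hm, ih hhg a ha m hm, lie_zero,
        add_zero]

end Graded

theorem iterBracket_eq_bot_of_not_commute_general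
    {Φ L G : Type*} [CommRing Φ]
    [LieRing L] [LieAlgebra Φ L] [Group G] [DecidableEq G]
    (Lg : G → Submodule Φ L)
    (hdirect : DirectSum.IsInternal Lg)
    (hgrading : ∀ a b : G, ∀ x ∈ Lg a, ∀ y ∈ Lg b, ⁅x, y⁆ ∈ Lg (a * b))
    (g g' : G) (hne : g * g' ≠ g' * g) :
    ∀ l : List G, iterBracket Lg (g' :: (l ++ [g])) = ⊥ := by
  intro l
  rw [iterBracket_cons Lg g' (by simp), bracketSpan_eq_bot_iff]
  exact lie_eq_zero_of_mem_iterBracket_append_singleton hdirect.submodule_iSupIndep hgrading l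
    hne.symm

/-- If `L` is a Lie algebra over a commutative ring `Φ` with `2` invertible, graded by a
group `G`, and `g g' ≠ g' g`, then every iterated bracket
`⁅L_{g'}, ⁅L_{g₁}, ⁅⋯, ⁅L_{g_n}, L_g⁆⋯⁆` (with `n ≥ 0`) vanishes. -/
theorem iterBracket_eq_bot_of_not_commute
    {Φ L G : Type*} [CommRing Φ] [Invertible (2 : Φ)]
    [LieRing L] [LieAlgebra Φ L] [Group G] [DecidableEq G]
    (Lg : G → Submodule Φ L)
    (hdirect : DirectSum.IsInternal Lg)
    (hgrading : ∀ a b : G, ∀ x ∈ Lg a, ∀ y ∈ Lg b, ⁅x, y⁆ ∈ Lg (a * b))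
    (g g' : G) (hne : g * g' ≠ g' * g) :
    ∀ l : List G, iterBracket Lg (g' :: (l ++ [g])) = ⊥ :=
  iterBracket_eq_bot_of_not_commute_general Lg hdirect hgrading g g' hne
end

section
/- Let L be a Lie algebra over a commutative ring Φ in which 2 is invertible, graded by a group G. Assume L is graded-prime, i.e. there are no nonzero graded ideals I, J of L with [I, J] = 0, and assume G is generated by the support of L, i.e. by the set of all g ∈ G with L_g ≠ 0. Then G is an abelian group. -/
/-!
Suppose `g, h ∈ supp L` do not commute, and let `H` be the centralizer of `g` in `G`. The
elements of `⊕_{u ∈ H} L_u` that commute with every `L_s`, `s ∉ H`, form a graded ideal `K`.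
It contains `L_g`, because `[L_g, L_s] ⊆ L_{gs} ∩ L_{sg} = 0` when `gs ≠ sg`, so `K ≠ 0`; and
its centralizer, again a graded ideal, contains `L_h ≠ 0`. This contradicts graded-primeness,
so the support commutes pairwise and hence generates an abelian group.
-/

/-- A Lie ideal `I` of a `G`-graded Lie algebra is graded if `I = ⊕_{g ∈ G} (I ∩ L_g)`. -/
def LieIdeal.IsGraded {Φ L G : Type*} [CommRing Φ] [LieRing L] [LieAlgebra Φ L]
    (Lg : G → Submodule Φ L) (I : LieIdeal Φ L) : Prop :=
  (I : Submodule Φ L) = ⨆ g : G, (I : Submodule Φ L) ⊓ Lg g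

open DirectSum

section

variable {Φ L G : Type*} [CommRing Φ] [LieRing L] [LieAlgebra Φ L]

def IsLieGrading [Mul G] (Lg : G → Submodule Φ L) : Prop :=
  ∀ a b : G, ∀ x ∈ Lg a, ∀ y ∈ Lg b, ⁅x, y⁆ ∈ Lg (a * b)

def IsGradedPrime (Lg : G → Submodule Φ L) : Prop :=
  ¬ ∃ I J : LieIdeal Φ L, I ≠ ⊥ ∧ J ≠ ⊥ ∧
    LieIdeal.IsGraded Lg I ∧ LieIdeal.IsGraded Lg J ∧ ⁅I, J⁆ = (⊥ : LieIdeal Φ L)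

def commutantSubmodule [Group G] (Lg : G → Submodule Φ L) (H : Subgroup G) : Submodule Φ L where
  carrier := {x | x ∈ ⨆ u ∈ H, Lg u ∧ ∀ s ∉ H, ∀ z ∈ Lg s, ⁅x, z⁆ = 0}
  add_mem' hx hy := ⟨add_mem hx.1 hy.1, fun s hs z hz => by
    rw [add_lie, hx.2 s hs z hz, hy.2 s hs z hz, add_zero]⟩
  zero_mem' := ⟨zero_mem _, fun _ _ z _ => zero_lie z⟩
  smul_mem' c _ hx := ⟨Submodule.smul_mem _ c hx.1, fun s hs z hz => by
    rw [smul_lie, hx.2 s hs z hz, smul_zero]⟩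

lemma LieModule.mem_ker_lieIdeal {I : LieIdeal Φ L} {x : L} :
    x ∈ LieModule.ker Φ L I ↔ ∀ m ∈ I, ⁅x, m⁆ = 0 := by
  simp [LieModule.mem_ker, Subtype.ext_iff]

lemma LieModule.lie_ker_lieIdeal_eq_bot (I : LieIdeal Φ L) : ⁅LieModule.ker Φ L I, I⁆ = ⊥ :=
  (LieSubmodule.lie_eq_bot_iff _ _).2 fun _ hx => LieModule.mem_ker_lieIdeal.1 hx

variable {Lg : G → Submodule Φ L}

lemma IsLieGrading.lie_mem_biSup [Group G] (hLg : IsLieGrading Lg) {H : Subgroup G} {w : G}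
    (hw : w ∈ H) {y : L} (hy : y ∈ Lg w) {x : L} (hx : x ∈ ⨆ u ∈ H, Lg u) :
    ⁅y, x⁆ ∈ ⨆ u ∈ H, Lg u := by
  rw [iSup_subtype'] at hx ⊢
  induction hx using Submodule.iSup_induction' with
  | mem v x hx => exact Submodule.mem_iSup_of_mem ⟨w * v, H.mul_mem hw v.2⟩ (hLg w v y hy x hx)
  | zero => simp
  | add x x' _ _ hx hx' => simpa [lie_add] using add_mem hx hx'

lemma IsGradedPrime.ker_eq_bot (hprime : IsGradedPrime Lg) {I : LieIdeal Φ L}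
    (hI : I.IsGraded Lg) (hker : (LieModule.ker Φ L I).IsGraded Lg) (hI0 : I ≠ ⊥) :
    LieModule.ker Φ L I = ⊥ := by
  by_contra h
  exact hprime ⟨_, I, h, hI0, hker, hI, LieModule.lie_ker_lieIdeal_eq_bot I⟩

variable [DecidableEq G] [Decomposition Lg]

lemma LieIdeal.isGraded_of_isHomogeneous {I : LieIdeal Φ L}
    (hI : SetLike.IsHomogeneous Lg (I : Submodule Φ L)) : I.IsGraded Lg := by
  classical
  refine le_antisymm (fun x hx => ?_) (iSup_le fun _ => inf_le_left)
  rw [← sum_support_decompose Lg x]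
  exact Submodule.sum_mem _ fun u _ =>
    Submodule.mem_iSup_of_mem u ⟨hI u hx, (decompose Lg x u).2⟩

lemma DirectSum.decompose_eq_zero_of_mem_biSup {S : Set G} {x : L} (hx : x ∈ ⨆ u ∈ S, Lg u)
    {u : G} (hu : u ∉ S) : (decompose Lg x u : L) = 0 := by
  rw [iSup_subtype'] at hx
  induction hx using Submodule.iSup_induction' with
  | mem v y hy => exact decompose_of_mem_ne Lg hy fun h => hu (h ▸ v.2)
  | zero => simp
  | add y z _ _ hy hz => simp [hy, hz]

namespace IsLieGrading

lemma lie_eq_zero_of_mul_ne_mul [Mul G] (hLg : IsLieGrading Lg) {a b : G} (hab : a * b ≠ b * a)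
    {x y : L} (hx : x ∈ Lg a) (hy : y ∈ Lg b) : ⁅x, y⁆ = 0 := by
  have hba : ⁅x, y⁆ ∈ Lg (b * a) := by
    rw [← lie_skew]
    exact neg_mem (hLg b a y hy x hx)
  have hdisj := (Decomposition.isInternal Lg).submodule_iSupIndep.pairwiseDisjoint hab
  exact Submodule.disjoint_def.1 hdisj _ (hLg a b x hx y hy) hba

variable [Group G]

lemma decompose_lie_mul (hLg : IsLieGrading Lg) {s : G} {z : L} (hz : z ∈ Lg s) (x : L) (u : G) :
    (decompose Lg ⁅x, z⁆ (u * s) : L) = ⁅(decompose Lg x u : L), z⁆ := by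
  induction x using Decomposition.inductionOn Lg with
  | zero => simp
  | @homogeneous v y =>
    rw [decompose_coe, of_apply]
    by_cases huv : v = u
    · subst huv
      rw [dif_pos rfl, decompose_of_mem_same Lg (hLg v s _ y.2 z hz)]
    · rw [dif_neg huv, decompose_of_mem_ne Lg (hLg v s _ y.2 z hz) (mul_right_cancel.mt huv)]
      simp
  | add x y hx hy => simp [add_lie, hx, hy]

lemma lie_decompose_eq_zero (hLg : IsLieGrading Lg) {s : G} {x z : L} (hz : z ∈ Lg s)
    (hxz : ⁅x, z⁆ = 0) (u : G) : ⁅(decompose Lg x u : L), z⁆ = 0 := by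
  simp [← hLg.decompose_lie_mul hz, hxz]

lemma isHomogeneous_ker (hLg : IsLieGrading Lg) {I : LieIdeal Φ L}
    (hI : SetLike.IsHomogeneous Lg (I : Submodule Φ L)) :
    SetLike.IsHomogeneous Lg (LieModule.ker Φ L I : Submodule Φ L) := by
  classical
  intro u x hx
  refine LieModule.mem_ker_lieIdeal.2 fun m hm => ?_
  rw [← sum_support_decompose Lg m, lie_sum]
  refine Finset.sum_eq_zero fun t _ => ?_
  have hmt : ⁅x, (decompose Lg m t : L)⁆ = 0 := LieModule.mem_ker_lieIdeal.1 hx _ (hI t hm)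
  exact hLg.lie_decompose_eq_zero (decompose Lg m t).2 hmt u

lemma lie_mem_commutantSubmodule (hLg : IsLieGrading Lg) {H : Subgroup G} {x : L}
    (hx : x ∈ commutantSubmodule Lg H) (y : L) : ⁅y, x⁆ ∈ commutantSubmodule Lg H := by
  induction y using Decomposition.inductionOn Lg with
  | zero => simp
  | add y y' hy hy' => simpa [add_lie] using add_mem hy hy'
  | @homogeneous w y =>
    by_cases hw : w ∈ H
    · refine ⟨hLg.lie_mem_biSup hw y.2 hx.1, fun s hs z hz => ?_⟩
      have hws : w * s ∉ H := (H.mul_mem_cancel_left hw).not.2 hs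
      rw [lie_lie, hx.2 s hs z hz, hx.2 _ hws _ (hLg w s _ y.2 z hz), lie_zero, sub_zero]
    · rw [← lie_skew, hx.2 w hw y y.2, neg_zero]
      exact zero_mem _

lemma isHomogeneous_commutantSubmodule (hLg : IsLieGrading Lg) (H : Subgroup G) :
    SetLike.IsHomogeneous Lg (commutantSubmodule Lg H) := by
  intro u x hx
  refine ⟨?_, fun s hs z hz => hLg.lie_decompose_eq_zero hz (hx.2 s hs z hz) u⟩
  by_cases hu : u ∈ H
  · exact le_biSup Lg hu (decompose Lg x u).2
  · rw [decompose_eq_zero_of_mem_biSup hx.1 hu]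
    exact zero_mem _

def commutantIdeal (hLg : IsLieGrading Lg) (H : Subgroup G) : LieIdeal Φ L :=
  { commutantSubmodule Lg H with lie_mem := fun hx => hLg.lie_mem_commutantSubmodule hx _ }

lemma le_commutantIdeal_centralizer (hLg : IsLieGrading Lg) (g : G) :
    Lg g ≤ (hLg.commutantIdeal (Subgroup.centralizer {g}) : Submodule Φ L) := fun _ hx =>
  ⟨le_biSup Lg (Subgroup.mem_centralizer_singleton_iff.2 rfl) hx, fun _ hs _ hz =>
    hLg.lie_eq_zero_of_mul_ne_mul
      (fun h => hs (Subgroup.mem_centralizer_singleton_iff.2 h.symm)) hx hz⟩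

lemma le_ker_commutantIdeal (hLg : IsLieGrading Lg) {H : Subgroup G} {h : G} (hh : h ∉ H) :
    Lg h ≤ (LieModule.ker Φ L (hLg.commutantIdeal H) : Submodule Φ L) := fun y hy =>
  LieModule.mem_ker_lieIdeal.2 fun _ hx => by rw [← lie_skew, hx.2 h hh y hy, neg_zero]

theorem mul_comm_of_ne_bot (hLg : IsLieGrading Lg) (hprime : IsGradedPrime Lg) {g h : G}
    (hg : Lg g ≠ ⊥) (hh : Lg h ≠ ⊥) : g * h = h * g := by
  by_contra hgh
  set K := hLg.commutantIdeal (Subgroup.centralizer {g})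
  have hgK : Lg g ≤ K := hLg.le_commutantIdeal_centralizer g
  have hhK : Lg h ≤ LieModule.ker Φ L K :=
    hLg.le_ker_commutantIdeal fun h' => hgh (Subgroup.mem_centralizer_singleton_iff.1 h').symm
  have hKhom : SetLike.IsHomogeneous Lg (K : Submodule Φ L) :=
    hLg.isHomogeneous_commutantSubmodule _
  have hK : K ≠ ⊥ := fun hK => hg <| le_bot_iff.1 <| by simpa [hK] using hgK
  have hker := hprime.ker_eq_bot (LieIdeal.isGraded_of_isHomogeneous hKhom)
    (LieIdeal.isGraded_of_isHomogeneous (hLg.isHomogeneous_ker hKhom)) hK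
  exact hh <| le_bot_iff.1 <| by simpa [hker] using hhK

end IsLieGrading

end

theorem mul_comm_of_gradedPrime_general
    {Φ L G : Type*} [CommRing Φ]
    [LieRing L] [LieAlgebra Φ L] [Group G] [DecidableEq G]
    (Lg : G → Submodule Φ L)
    (hdirect : DirectSum.IsInternal Lg)
    (hgrading : ∀ a b : G, ∀ x ∈ Lg a, ∀ y ∈ Lg b, ⁅x, y⁆ ∈ Lg (a * b))
    (hprime : ¬ ∃ I J : LieIdeal Φ L, I ≠ ⊥ ∧ J ≠ ⊥ ∧
      LieIdeal.IsGraded Lg I ∧ LieIdeal.IsGraded Lg J ∧ ⁅I, J⁆ = (⊥ : LieIdeal Φ L))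
    (hsupp : Subgroup.closure {g : G | Lg g ≠ ⊥} = ⊤) :
    ∀ a b : G, a * b = b * a := by
  let := hdirect.chooseDecomposition
  have hcomm := Subgroup.isMulCommutative_closure (k := {g : G | Lg g ≠ ⊥}) fun _ hg _ hh =>
    IsLieGrading.mul_comm_of_ne_bot hgrading hprime hg hh
  rw [hsupp] at hcomm
  intro a b
  simpa using
    congrArg Subtype.val (hcomm.is_comm.comm (⟨a, trivial⟩ : (⊤ : Subgroup G)) ⟨b, trivial⟩)

/-- If `L` is a Lie algebra over a commutative ring `Φ` with `2` invertible, graded by a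
group `G`, `L` is graded-prime (no nonzero graded ideals `I, J` with `⁅I, J⁆ = 0`), and `G`
is generated by the support of `L`, then `G` is abelian. -/
theorem mul_comm_of_gradedPrime
    {Φ L G : Type*} [CommRing Φ] [Invertible (2 : Φ)]
    [LieRing L] [LieAlgebra Φ L] [Group G] [DecidableEq G]
    (Lg : G → Submodule Φ L)
    (hdirect : DirectSum.IsInternal Lg)
    (hgrading : ∀ a b : G, ∀ x ∈ Lg a, ∀ y ∈ Lg b, ⁅x, y⁆ ∈ Lg (a * b))
    (hprime : ¬ ∃ I J : LieIdeal Φ L, I ≠ ⊥ ∧ J ≠ ⊥ ∧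
      LieIdeal.IsGraded Lg I ∧ LieIdeal.IsGraded Lg J ∧ ⁅I, J⁆ = (⊥ : LieIdeal Φ L))
    (hsupp : Subgroup.closure {g : G | Lg g ≠ ⊥} = ⊤) :
    ∀ a b : G, a * b = b * a :=
  mul_comm_of_gradedPrime_general Lg hdirect hgrading hprime hsupp
end

section
/- Let L be a Lie algebra over a commutative ring Φ in which 2 is invertible, graded by a group G. If L is simple (as a Lie algebra) and G is generated by the support of L, i.e. by the set of all g ∈ G with L_g ≠ 0, then G is an abelian group. -/
/-!
Suppose `a` and `b` lie in the support but do not commute, and let `H` be the centralizer of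
`a`. Components of non-commuting degrees bracket to zero, because `⁅L_g, L_h⁆` lies in both
`L_{gh}` and `L_{hg}`. Hence the span of the components `L_g` with `g ∉ H`, together with the
brackets `⁅L_h, L_k⁆` with `h, k ∉ H` and `hk ∈ H`, is an ideal. It contains `L_b ≠ 0`, so by
simplicity it is all of `L`; but it has no component in degree `a`, contradicting `L_a ≠ 0`.
So the support consists of pairwise commuting elements, and so does the group it generates.
-/

namespace GroupGradedLieAlgebra

variable {Φ L G : Type*} [CommRing Φ] [LieRing L] [LieAlgebra Φ L] [Group G]
  {Lg : G → Submodule Φ L}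

lemma lie_eq_zero_of_mul_ne_mul (hind : iSupIndep Lg)
    (hgrading : ∀ a b : G, ∀ x ∈ Lg a, ∀ y ∈ Lg b, ⁅x, y⁆ ∈ Lg (a * b))
    {g h : G} (hgh : g * h ≠ h * g) {x y : L} (hx : x ∈ Lg g) (hy : y ∈ Lg h) :
    ⁅x, y⁆ = 0 := by
  have hyx : ⁅x, y⁆ ∈ Lg (h * g) := by
    rw [← lie_skew]
    exact neg_mem (hgrading _ _ y hy x hx)
  exact Submodule.disjoint_def.mp (hind.pairwiseDisjoint hgh) _ (hgrading _ _ x hx y hy) hyx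

variable (Lg) in
def outsideSet (H : Subgroup G) : Set L :=
  {x | ∃ g ∉ H, x ∈ Lg g} ∪
    {x | ∃ h ∉ H, ∃ k ∉ H, h * k ∈ H ∧ ∃ y ∈ Lg h, ∃ z ∈ Lg k, ⁅y, z⁆ = x}

lemma mem_span_outsideSet_of_notMem {H : Subgroup G} {g : G} (hg : g ∉ H) {x : L}
    (hx : x ∈ Lg g) : x ∈ Submodule.span Φ (outsideSet Lg H) :=
  Submodule.subset_span (Or.inl ⟨g, hg, hx⟩)

lemma lie_mem_span_outsideSet {H : Subgroup G} {h k : G} (hh : h ∉ H) (hk : k ∉ H)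
    (hhk : h * k ∈ H) {y z : L} (hy : y ∈ Lg h) (hz : z ∈ Lg k) :
    ⁅y, z⁆ ∈ Submodule.span Φ (outsideSet Lg H) :=
  Submodule.subset_span (Or.inr ⟨h, hh, k, hk, hhk, y, hy, z, hz, rfl⟩)

section

variable (hind : iSupIndep Lg)
  (hgrading : ∀ a b : G, ∀ x ∈ Lg a, ∀ y ∈ Lg b, ⁅x, y⁆ ∈ Lg (a * b))
  {H : Subgroup G}
include hind hgrading

lemma lie_homogeneous_mem_span_outsideSet {t : G} {x m : L} (hx : x ∈ Lg t)
    (hm : m ∈ outsideSet Lg H) : ⁅x, m⁆ ∈ Submodule.span Φ (outsideSet Lg H) := by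
  rcases hm with ⟨g, hg, hm⟩ | ⟨h, hh, k, hk, hhk, y, hy, z, hz, rfl⟩
  · by_cases htg : t * g ∈ H
    · have ht : t ∉ H := fun ht => hg ((H.mul_mem_cancel_left ht).mp htg)
      exact lie_mem_span_outsideSet ht hg htg hx hm
    · exact mem_span_outsideSet_of_notMem htg (hgrading _ _ x hx m hm)
  · by_cases ht : t ∈ H
    · rw [leibniz_lie]
      refine add_mem ?_ ?_
      · have hth : t * h ∉ H := fun hth => hh ((H.mul_mem_cancel_left ht).mp hth)
        have hthk : t * h * k ∈ H := by rw [mul_assoc]; exact H.mul_mem ht hhk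
        exact lie_mem_span_outsideSet hth hk hthk (hgrading _ _ x hx y hy) hz
      · by_cases htk : t * k = k * t
        · have htk' : t * k ∉ H := fun htk' => hk ((H.mul_mem_cancel_left ht).mp htk')
          have hhtk : h * (t * k) ∈ H := by rw [htk, ← mul_assoc]; exact H.mul_mem hhk ht
          exact lie_mem_span_outsideSet hh htk' hhtk hy (hgrading _ _ x hx z hz)
        · rw [lie_eq_zero_of_mul_ne_mul hind hgrading htk hx hz, lie_zero]
          exact zero_mem _
    · have hthk : t * (h * k) ∉ H := fun hthk => ht ((H.mul_mem_cancel_right hhk).mp hthk)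
      exact mem_span_outsideSet_of_notMem hthk
        (hgrading _ _ x hx _ (hgrading _ _ y hy z hz))

lemma span_outsideSet_le_iSup_ne {a : G} (ha : Subgroup.centralizer {a} ≤ H) :
    Submodule.span Φ (outsideSet Lg H) ≤ ⨆ (g : G) (_ : g ≠ a), Lg g := by
  rw [Submodule.span_le]
  rintro _ (⟨g, hg, hx⟩ | ⟨h, hh, k, hk, hhk, y, hy, z, hz, rfl⟩)
  · have hga : g ≠ a := by
      rintro rfl
      exact hg (ha (Subgroup.mem_centralizer_singleton_iff.mpr rfl))
    exact Submodule.mem_iSup_of_mem g (Submodule.mem_iSup_of_mem hga hx)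
  · by_cases hhka : h * k = a
    · -- `h` commutes with `h * k = a` as soon as it commutes with `k`
      have hkh : h * k ≠ k * h := by
        intro hkh
        refine hh (ha (Subgroup.mem_centralizer_singleton_iff.mpr ?_))
        rw [← hhka, mul_assoc, ← hkh]
      rw [lie_eq_zero_of_mul_ne_mul hind hgrading hkh hy hz]
      exact zero_mem _
    · exact Submodule.mem_iSup_of_mem (h * k)
        (Submodule.mem_iSup_of_mem hhka (hgrading _ _ y hy z hz))

end

variable [DecidableEq G]

lemma lie_mem_span_outsideSet_of_mem_span (hdirect : DirectSum.IsInternal Lg)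
    (hgrading : ∀ a b : G, ∀ x ∈ Lg a, ∀ y ∈ Lg b, ⁅x, y⁆ ∈ Lg (a * b))
    {H : Subgroup G} (x : L) {m : L} (hm : m ∈ Submodule.span Φ (outsideSet Lg H)) :
    ⁅x, m⁆ ∈ Submodule.span Φ (outsideSet Lg H) := by
  have hx : x ∈ ⨆ g, Lg g := by rw [hdirect.submodule_iSup_eq_top]; trivial
  refine Submodule.iSup_induction Lg (motive := fun x => ⁅x, m⁆ ∈ _) hx ?_ ?_ ?_
  · intro t x hx
    induction hm using Submodule.span_induction with
    | mem m hm =>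
      exact lie_homogeneous_mem_span_outsideSet hdirect.submodule_iSupIndep hgrading hx hm
    | zero => simp only [lie_zero, zero_mem]
    | add u v _ _ hu hv => rw [lie_add]; exact add_mem hu hv
    | smul c u _ hu => rw [lie_smul]; exact Submodule.smul_mem _ _ hu
  · simp only [zero_lie, zero_mem]
  · intro u v hu hv
    rw [add_lie]
    exact add_mem hu hv

def outsideIdeal (hdirect : DirectSum.IsInternal Lg)
    (hgrading : ∀ a b : G, ∀ x ∈ Lg a, ∀ y ∈ Lg b, ⁅x, y⁆ ∈ Lg (a * b))
    (H : Subgroup G) : LieIdeal Φ L where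
  toSubmodule := Submodule.span Φ (outsideSet Lg H)
  lie_mem {x _} hm := lie_mem_span_outsideSet_of_mem_span hdirect hgrading x hm

theorem mul_comm_of_ne_bot (hdirect : DirectSum.IsInternal Lg)
    (hgrading : ∀ a b : G, ∀ x ∈ Lg a, ∀ y ∈ Lg b, ⁅x, y⁆ ∈ Lg (a * b))
    (hsimple : LieAlgebra.IsSimple Φ L) {a b : G} (ha : Lg a ≠ ⊥) (hb : Lg b ≠ ⊥) :
    a * b = b * a := by
  by_contra hab
  set I := outsideIdeal hdirect hgrading (Subgroup.centralizer {a})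
  have hbH : b ∉ Subgroup.centralizer {a} := fun hbH =>
    hab (Subgroup.mem_centralizer_singleton_iff.mp hbH).symm
  have hbI : Lg b ≤ I.toSubmodule := fun _ => mem_span_outsideSet_of_notMem hbH
  have hI : I = ⊤ := (hsimple.eq_bot_or_eq_top I).resolve_left fun hI =>
    hb (eq_bot_iff.mpr (by simpa [hI] using hbI))
  have haI : Lg a ≤ I.toSubmodule := by simp [hI]
  exact ha ((hdirect.submodule_iSupIndep a).eq_bot_of_le (haI.trans
    (span_outsideSet_le_iSup_ne hdirect.submodule_iSupIndep hgrading le_rfl)))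

end GroupGradedLieAlgebra

open GroupGradedLieAlgebra in
theorem mul_comm_of_isSimple_general
    {Φ L G : Type*} [CommRing Φ]
    [LieRing L] [LieAlgebra Φ L] [Group G] [DecidableEq G]
    (Lg : G → Submodule Φ L)
    (hdirect : DirectSum.IsInternal Lg)
    (hgrading : ∀ a b : G, ∀ x ∈ Lg a, ∀ y ∈ Lg b, ⁅x, y⁆ ∈ Lg (a * b))
    (hsimple : LieAlgebra.IsSimple Φ L)
    (hsupp : Subgroup.closure {g : G | Lg g ≠ ⊥} = ⊤) :
    ∀ a b : G, a * b = b * a := by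
  have hcomm := Subgroup.isMulCommutative_closure (k := {g : G | Lg g ≠ ⊥})
    fun _ hx _ hy => mul_comm_of_ne_bot hdirect hgrading hsimple hx hy
  rw [hsupp] at hcomm
  exact fun a b => setLike_mul_comm (Subgroup.mem_top a) (Subgroup.mem_top b)

/-- If `L` is a simple Lie algebra over a commutative ring `Φ` with `2` invertible, graded
by a group `G` that is generated by the support of `L`, then `G` is abelian. -/
theorem mul_comm_of_isSimple
    {Φ L G : Type*} [CommRing Φ] [Invertible (2 : Φ)]
    [LieRing L] [LieAlgebra Φ L] [Group G] [DecidableEq G]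
    (Lg : G → Submodule Φ L)
    (hdirect : DirectSum.IsInternal Lg)
    (hgrading : ∀ a b : G, ∀ x ∈ Lg a, ∀ y ∈ Lg b, ⁅x, y⁆ ∈ Lg (a * b))
    (hsimple : LieAlgebra.IsSimple Φ L)
    (hsupp : Subgroup.closure {g : G | Lg g ≠ ⊥} = ⊤) :
    ∀ a b : G, a * b = b * a :=
  mul_comm_of_isSimple_general Lg hdirect hgrading hsimple hsupp
end
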